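/- arXiv:1406.0165 — 3 statements merged into one kernel-verified Lean document; each statement's English description precedes it below -/
import Mathlib

section
/- For any p in R^3 and unit vector ω, with p_0 = √(1+|p|²) and p̂ = p/p_0, one has p_0(1 + p̂·ω) ≥ (1 + |p×ω|²)/(2p_0), and consequently |p̂×ω|² ≤ 2(1 + p̂·ω). -/
open RealInnerProductSpace

noncomputable def cross3 (a b : EuclideanSpace ℝ (Fin 3)) : EuclideanSpace ℝ (Fin 3) :=
  WithLp.toLp 2 ![a 1 * b 2 - a 2 * b 1, a 2 * b 0 - a 0 * b 2, a 0 * b 1 - a 1 * b 0]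

/-! Write `s = p·ω`, so that `p₀(1 + p̂·ω) = p₀ + s`. Since `|ω| = 1`, Lagrange's identity
`|p×ω|² = |p|² - s²` gives `1 + |p×ω|² = p₀² - s²`, and the first inequality is
`p₀ + s - (p₀² - s²)/(2p₀) = (p₀ + s)²/(2p₀) ≥ 0`. Dividing it by `p₀/2` and dropping the `1` gives
the second, because `|p̂×ω|² = |p×ω|²/p₀²`. -/

theorem EuclideanSpace.norm_sq_fin_three (x : EuclideanSpace ℝ (Fin 3)) :
    ‖x‖ ^ 2 = x 0 ^ 2 + x 1 ^ 2 + x 2 ^ 2 := by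
  simp [EuclideanSpace.norm_sq_eq, Fin.sum_univ_three]

theorem EuclideanSpace.inner_fin_three (x y : EuclideanSpace ℝ (Fin 3)) :
    ⟪x, y⟫ = x 0 * y 0 + x 1 * y 1 + x 2 * y 2 := by
  simp [PiLp.inner_apply, Fin.sum_univ_three, mul_comm]

theorem norm_cross3_sq (a b : EuclideanSpace ℝ (Fin 3)) :
    ‖cross3 a b‖ ^ 2 = ‖a‖ ^ 2 * ‖b‖ ^ 2 - ⟪a, b⟫ ^ 2 := by
  simp only [EuclideanSpace.norm_sq_fin_three, EuclideanSpace.inner_fin_three, cross3,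
    Matrix.cons_val_zero, Matrix.cons_val_one, Matrix.cons_val]
  ring

theorem cross3_smul_left (c : ℝ) (a b : EuclideanSpace ℝ (Fin 3)) :
    cross3 (c • a) b = c • cross3 a b := by
  ext i
  fin_cases i <;> simp [cross3] <;> ring

theorem sq_sub_sq_div_le_add {a : ℝ} (ha : 0 < a) (s : ℝ) : (a ^ 2 - s ^ 2) / (2 * a) ≤ a + s := by
  rw [div_le_iff₀ (by positivity)]
  nlinarith [sq_nonneg (a + s)]

theorem stmt2 (p ω : EuclideanSpace ℝ (Fin 3)) (hω : ‖ω‖ = 1)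
    (p0 : ℝ) (hp0 : p0 = Real.sqrt (1 + ‖p‖ ^ 2))
    (phat : EuclideanSpace ℝ (Fin 3)) (hphat : phat = p0⁻¹ • p) :
    p0 * (1 + ⟪phat, ω⟫) ≥ (1 + ‖cross3 p ω‖ ^ 2) / (2 * p0) ∧
      ‖cross3 phat ω‖ ^ 2 ≤ 2 * (1 + ⟪phat, ω⟫) := by
  have hp0_pos : 0 < p0 := hp0 ▸ Real.sqrt_pos.2 (by positivity)
  have hp0_sq : p0 ^ 2 = 1 + ‖p‖ ^ 2 := hp0 ▸ Real.sq_sqrt (by positivity)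
  have h_energy : p0 * (1 + ⟪phat, ω⟫) = p0 + ⟪p, ω⟫ := by
    rw [hphat, real_inner_smul_left]
    field_simp
  have h_first : (1 + ‖cross3 p ω‖ ^ 2) / (2 * p0) ≤ p0 * (1 + ⟪phat, ω⟫) := by
    have h_lagrange : 1 + ‖cross3 p ω‖ ^ 2 = p0 ^ 2 - ⟪p, ω⟫ ^ 2 := by
      rw [norm_cross3_sq, hω, hp0_sq]
      ring
    rw [h_energy, h_lagrange]
    exact sq_sub_sq_div_le_add hp0_pos _
  refine ⟨h_first, ?_⟩
  calc ‖cross3 phat ω‖ ^ 2 = ‖cross3 p ω‖ ^ 2 / p0 ^ 2 := by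
        rw [hphat, cross3_smul_left, norm_smul, mul_pow, norm_inv, Real.norm_of_nonneg hp0_pos.le]
        field_simp
    _ ≤ (1 + ‖cross3 p ω‖ ^ 2) / p0 ^ 2 := by gcongr; linarith
    _ = 2 * ((1 + ‖cross3 p ω‖ ^ 2) / (2 * p0)) / p0 := by field_simp
    _ ≤ 2 * (p0 * (1 + ⟪phat, ω⟫)) / p0 := by gcongr
    _ = 2 * (1 + ⟪phat, ω⟫) := by field_simp
end

section
/- For vectors E, B, p̂, ω in R^3 with |ω| = 1 and |p̂| ≤ 1, one has |ω × (E + p̂×B)| ≤ |ω×E + B| + (1 + p̂·ω)|B| + |ω·B|. -/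
/-! The vector triple product expansion `ω × (p̂ × B) = (ω·B) p̂ - (ω·p̂) B` rewrites the left-hand
side as `(ω × E + B) - (1 + p̂·ω) B + (ω·B) p̂`; the triangle inequality then gives the bound, using
`‖p̂‖ ≤ 1` and `1 + p̂·ω ≥ 0` (Cauchy–Schwarz). -/

open RealInnerProductSpace

open Matrix

theorem EuclideanSpace.real_inner_eq_dotProduct {ι : Type*} [Fintype ι]
    (x y : EuclideanSpace ℝ ι) : ⟪x, y⟫ = x.ofLp ⬝ᵥ y.ofLp := by
  simp [EuclideanSpace.inner_eq_star_dotProduct, dotProduct_comm]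

theorem cross3_eq_toLp_crossProduct (a b : EuclideanSpace ℝ (Fin 3)) :
    cross3 a b = WithLp.toLp 2 (a.ofLp ⨯₃ b.ofLp) := rfl

theorem cross3_add_right (a b c : EuclideanSpace ℝ (Fin 3)) :
    cross3 a (b + c) = cross3 a b + cross3 a c := by
  simp [cross3_eq_toLp_crossProduct]

theorem cross3_cross3 (u v w : EuclideanSpace ℝ (Fin 3)) :
    cross3 u (cross3 v w) = ⟪u, w⟫ • v - ⟪u, v⟫ • w := by
  simp [cross3_eq_toLp_crossProduct, cross_cross_eq_smul_sub_smul',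
    EuclideanSpace.real_inner_eq_dotProduct, dotProduct_comm]

theorem cross3_add_cross3_eq (E B ω p : EuclideanSpace ℝ (Fin 3)) :
    cross3 ω (E + cross3 p B) = (cross3 ω E + B) - (1 + ⟪p, ω⟫) • B + ⟪ω, B⟫ • p := by
  rw [cross3_add_right, cross3_cross3, real_inner_comm ω p]
  module

theorem zero_le_one_add_real_inner {F : Type*} [NormedAddCommGroup F] [InnerProductSpace ℝ F]
    {x y : F} (hx : ‖x‖ ≤ 1) (hy : ‖y‖ = 1) : 0 ≤ 1 + ⟪x, y⟫ := by
  have : |⟪x, y⟫| ≤ 1 :=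
    (abs_real_inner_le_norm x y).trans (by rw [hy, mul_one]; exact hx)
  linarith [neg_abs_le ⟪x, y⟫]

theorem stmt7 (E B ω phat : EuclideanSpace ℝ (Fin 3)) (hω : ‖ω‖ = 1)
    (hphat : ‖phat‖ ≤ 1) :
    ‖cross3 ω (E + cross3 phat B)‖ ≤
      ‖cross3 ω E + B‖ + (1 + ⟪phat, ω⟫) * ‖B‖ + |⟪ω, B⟫| := by
  have hcoef := zero_le_one_add_real_inner hphat hω
  rw [cross3_add_cross3_eq]
  calc ‖(cross3 ω E + B) - (1 + ⟪phat, ω⟫) • B + ⟪ω, B⟫ • phat‖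
      ≤ ‖cross3 ω E + B‖ + ‖(1 + ⟪phat, ω⟫) • B‖ + ‖⟪ω, B⟫ • phat‖ :=
        norm_add_le_of_le (norm_sub_le _ _) le_rfl
    _ ≤ ‖cross3 ω E + B‖ + (1 + ⟪phat, ω⟫) * ‖B‖ + |⟪ω, B⟫| * 1 := by
        rw [norm_smul, norm_smul, Real.norm_of_nonneg hcoef, Real.norm_eq_abs]
        gcongr
    _ = ‖cross3 ω E + B‖ + (1 + ⟪phat, ω⟫) * ‖B‖ + |⟪ω, B⟫| := by rw [mul_one]
end

section
/- Gronwall-type bootstrap with double exponential: let g : [0,T] → [0,∞) be integrable, C₁ > 0 a constant, and h : [0,T) → [1,∞) a continuous function satisfying h(t) ≤ C₁ + C₁ ∫₀^t g(s) h(s) log h(s) ds for all t ∈ [0,T). Then there exists a constant Δ₀ > 0 depending only on C₁ such that h(t) ≤ 2C₁ exp(exp(Δ₀ ∫₀^t g(s) ds)) for all t ∈ [0,T). -/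
/-!
Put `Φ t = C₁ + C₁ ∫₀ᵗ g h log h`, so that `1 ≤ h ≤ Φ` and, almost everywhere,
`Φ' = C₁ g h log h ≤ C₁ g Φ (1 + log Φ)`. Hence `log (1 + log Φ) - C₁ ∫₀ᵗ g` is an absolutely
continuous function with nonpositive derivative, so `1 + log Φ ≤ (1 + log C₁) e^{C₁ G}` with
`G = ∫₀ᵗ g`. Bernoulli's inequality `1 + a (x - 1) ≤ x ^ a` for `x = e^{C₁ G}` and
`a = 1 + log C₁ ≥ 1` turns this into `Φ ≤ C₁ exp (exp (C₁ (1 + log C₁) G))`.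
-/

open MeasureTheory Set Filter Real

theorem LipschitzOnWith.absolutelyContinuousOnInterval_comp {X Y : Type*} [PseudoMetricSpace X]
    [PseudoMetricSpace Y] {φ : X → Y} {f : ℝ → X} {K : NNReal} {s : Set X} {a b : ℝ}
    (hφ : LipschitzOnWith K φ s) (hf : AbsolutelyContinuousOnInterval f a b)
    (hfs : MapsTo f (uIcc a b) s) : AbsolutelyContinuousOnInterval (fun x => φ (f x)) a b := by
  have hK := Tendsto.const_mul (K : ℝ) hf
  rw [mul_zero] at hK
  refine squeeze_zero' (Eventually.of_forall fun _ => Finset.sum_nonneg fun _ _ => dist_nonneg)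
    ?_ hK
  filter_upwards [mem_inf_of_right (mem_principal_self _)] with E hE
  rw [Finset.mul_sum]
  exact Finset.sum_le_sum fun i hi =>
    hφ.dist_le_mul _ (hfs (hE.1 i hi).1) _ (hfs (hE.1 i hi).2)

theorem AbsolutelyContinuousOnInterval.le_of_ae_deriv_nonpos {f : ℝ → ℝ} {a b : ℝ}
    (hf : AbsolutelyContinuousOnInterval f a b) (hab : a ≤ b)
    (hf' : ∀ᵐ x, x ∈ Icc a b → deriv f x ≤ 0) : f b ≤ f a := by
  have hint : 0 ≤ ∫ x in a..b, -deriv f x := by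
    refine intervalIntegral.integral_nonneg_of_ae_restrict hab ?_
    rw [EventuallyLE, ae_restrict_iff' measurableSet_Icc]
    filter_upwards [hf'] with x hx hxI using neg_nonneg.2 (hx hxI)
  rw [intervalIntegral.integral_neg, hf.integral_deriv_eq_sub] at hint
  linarith

theorem Real.lipschitzOnWith_log_Ici_one : LipschitzOnWith 1 log (Ici 1) := by
  refine LipschitzOnWith.of_le_add fun x hx y hy => ?_
  have hx0 : 0 < x := zero_lt_one.trans_le hx
  have hy0 : 0 < y := zero_lt_one.trans_le hy
  have hlog : log x - log y ≤ x / y - 1 := by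
    rw [← log_div hx0.ne' hy0.ne']
    exact log_le_sub_one_of_pos (div_pos hx0 hy0)
  have hdiv : x / y - 1 ≤ |x - y| := by
    rw [div_sub_one hy0.ne', div_le_iff₀ hy0]
    nlinarith [le_abs_self (x - y), abs_nonneg (x - y), mem_Ici.1 hy]
  rw [dist_eq]
  linarith

theorem AbsolutelyContinuousOnInterval.log_one_add_log {f : ℝ → ℝ} {a b : ℝ}
    (hf : AbsolutelyContinuousOnInterval f a b) (hf1 : ∀ x ∈ uIcc a b, 1 ≤ f x) :
    AbsolutelyContinuousOnInterval (fun x => log (1 + log (f x))) a b := by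
  have hconst : AbsolutelyContinuousOnInterval (fun _ => (1 : ℝ)) a b :=
    (LipschitzWith.const (1 : ℝ)).lipschitzOnWith.absolutelyContinuousOnInterval
  have hlog := lipschitzOnWith_log_Ici_one.absolutelyContinuousOnInterval_comp hf hf1
  refine lipschitzOnWith_log_Ici_one.absolutelyContinuousOnInterval_comp (hconst.fun_add hlog)
    fun x hx => ?_
  simpa using log_nonneg (hf1 x hx)

theorem deriv_log_one_add_log_sub_nonpos {C x : ℝ} {g h I G : ℝ → ℝ}
    (hI : HasDerivAt I (g x * h x * log (h x)) x) (hG : HasDerivAt G (g x) x)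
    (hC : 0 ≤ C) (hg : 0 ≤ g x) (hh : 1 ≤ h x) (hle : h x ≤ C + C * I x) :
    deriv (fun s => log (1 + log (C + C * I s)) - C * G s) x ≤ 0 := by
  set Φ := C + C * I x
  have hΦ : 1 ≤ Φ := hh.trans hle
  have hlogΦ : 0 ≤ log Φ := log_nonneg hΦ
  have hderiv := (((((hI.const_mul C).const_add C).log (by positivity)).const_add 1).log
    (by positivity)).fun_sub (hG.const_mul C)
  rw [hderiv.deriv, sub_nonpos, div_div, div_le_iff₀ (by positivity)]
  have hlogh : log (h x) ≤ 1 + log Φ := by linarith [log_le_log (by linarith) hle]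
  have hgh : g x * h x ≤ g x * Φ := mul_le_mul_of_nonneg_left hle hg
  have key : g x * h x * log (h x) ≤ g x * (Φ * (1 + log Φ)) := by
    calc g x * h x * log (h x) ≤ g x * Φ * (1 + log Φ) :=
          mul_le_mul hgh hlogh (log_nonneg hh) (by positivity)
      _ = g x * (Φ * (1 + log Φ)) := mul_assoc _ _ _
  calc C * (g x * h x * log (h x)) ≤ C * (g x * (Φ * (1 + log Φ))) :=
        mul_le_mul_of_nonneg_left key hC
    _ = C * g x * (Φ * (1 + log Φ)) := by ring

theorem log_one_add_log_le_of_le_add_integral {C t : ℝ} {g h : ℝ → ℝ} (ht : 0 ≤ t)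
    (hg : ∀ s ∈ Icc 0 t, 0 ≤ g s) (hgi : IntervalIntegrable g volume 0 t)
    (hGi : IntervalIntegrable (fun s => g s * h s * log (h s)) volume 0 t)
    (hh : ∀ s ∈ Icc 0 t, 1 ≤ h s)
    (hle : ∀ s ∈ Icc 0 t, h s ≤ C + C * ∫ r in (0 : ℝ)..s, g r * h r * log (h r)) :
    log (1 + log (C + C * ∫ s in (0 : ℝ)..t, g s * h s * log (h s))) ≤
      log (1 + log C) + C * ∫ s in (0 : ℝ)..t, g s := by
  set I := fun s => ∫ r in (0 : ℝ)..s, g r * h r * log (h r)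
  have hzero : (0 : ℝ) ∈ uIcc 0 t := left_mem_uIcc
  have hΦ1 : ∀ s ∈ uIcc 0 t, 1 ≤ C + C * I s := by
    rw [uIcc_of_le ht]
    exact fun s hs => (hh s hs).trans (hle s hs)
  have hC : 0 ≤ C := by simpa [I] using zero_le_one.trans (hΦ1 0 hzero)
  have hΦ : AbsolutelyContinuousOnInterval (fun s => C + C * I s) 0 t :=
    (LipschitzWith.const C).lipschitzOnWith.absolutelyContinuousOnInterval.fun_add
      ((hGi.absolutelyContinuousOnInterval_intervalIntegral hzero).const_mul C)
  have hv := (hΦ.log_one_add_log hΦ1).fun_sub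
    ((hgi.absolutelyContinuousOnInterval_intervalIntegral hzero).const_mul C)
  have hmono := hv.le_of_ae_deriv_nonpos ht <| by
    filter_upwards [hGi.ae_hasDerivAt_integral, hgi.ae_hasDerivAt_integral] with x hIx hGx hx
    have hx' : x ∈ uIcc 0 t := by rwa [uIcc_of_le ht]
    exact deriv_log_one_add_log_sub_nonpos (hIx hx' 0 hzero) (hGx hx' 0 hzero) hC
      (hg x hx) (hh x hx) (hle x hx)
  simpa [I] using hmono

theorem le_mul_exp_exp_of_log_one_add_log_le {C y u : ℝ} (hC : 1 ≤ C) (hy : 0 ≤ y)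
    (hu : 1 ≤ u) (h : log (1 + log u) ≤ log (1 + log C) + C * y) :
    u ≤ C * exp (exp (C * (1 + log C) * y)) := by
  have hlogC : 0 ≤ log C := log_nonneg hC
  have hlogu : 0 ≤ log u := log_nonneg hu
  have hx : 1 ≤ exp (C * y) := one_le_exp (by positivity)
  have h₁ : 1 + log u ≤ (1 + log C) * exp (C * y) := by
    rw [← exp_le_exp, exp_log (by positivity), exp_add, exp_log (by positivity)] at h
    exact h
  have hbernoulli : 1 + (1 + log C) * (exp (C * y) - 1) ≤ exp (C * (1 + log C) * y) := by
    have := one_add_mul_self_le_rpow_one_add (s := exp (C * y) - 1) (by linarith)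
      (p := 1 + log C) (by linarith)
    rwa [add_sub_cancel, ← exp_mul, show C * y * (1 + log C) = C * (1 + log C) * y by ring]
      at this
  have h₂ : log u ≤ log C + exp (C * (1 + log C) * y) := by
    linarith [mul_sub_one (1 + log C) (exp (C * y))]
  calc u = exp (log u) := (exp_log (by linarith)).symm
    _ ≤ exp (log C + exp (C * (1 + log C) * y)) := exp_le_exp.2 h₂
    _ = C * exp (exp (C * (1 + log C) * y)) := by rw [exp_add, exp_log (by linarith)]

theorem stmt15_general (C₁ : ℝ) :
    ∃ Δ₀ > 0, ∀ (T : ℝ), 0 < T → ∀ (g h : ℝ → ℝ),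
      (∀ s ∈ Set.Icc 0 T, 0 ≤ g s) →
      MeasureTheory.IntegrableOn g (Set.Icc 0 T) →
      ContinuousOn h (Set.Ico 0 T) →
      (∀ t ∈ Set.Ico 0 T, 1 ≤ h t) →
      (∀ t ∈ Set.Ico 0 T,
        h t ≤ C₁ + C₁ * ∫ s in (0:ℝ)..t, g s * h s * Real.log (h s)) →
      ∀ t ∈ Set.Ico 0 T,
        h t ≤ 2 * C₁ * Real.exp (Real.exp (Δ₀ * ∫ s in (0:ℝ)..t, g s)) := by
  by_cases hC : 1 ≤ C₁
  swap
  · -- at `t = 0` the hypotheses give `1 ≤ h 0 ≤ C₁`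
    refine ⟨1, one_pos, fun T hT g h _ _ _ hh hineq => absurd ?_ hC⟩
    simpa using (hh 0 ⟨le_rfl, hT⟩).trans (hineq 0 ⟨le_rfl, hT⟩)
  refine ⟨C₁ * (1 + log C₁), by have := log_nonneg hC; positivity, ?_⟩
  intro T _ g h hg hgi hhc hh hineq t ht
  have hsub : Icc 0 t ⊆ Ico 0 T := fun s hs => ⟨hs.1, hs.2.trans_lt ht.2⟩
  have hIccT : Icc 0 t ⊆ Icc 0 T := Icc_subset_Icc_right ht.2.le
  have hgi' : IntervalIntegrable g volume 0 t :=
    (intervalIntegrable_iff_integrableOn_Icc_of_le ht.1).2 (hgi.mono_set hIccT)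
  have hhc' : ContinuousOn h (uIcc 0 t) := uIcc_of_le ht.1 ▸ hhc.mono hsub
  have hGi := (hgi'.mul_continuousOn hhc').mul_continuousOn
    (hhc'.log fun s hs => (one_pos.trans_le (hh s (hsub (uIcc_of_le ht.1 ▸ hs)))).ne')
  have hbound := le_mul_exp_exp_of_log_one_add_log_le hC
    (intervalIntegral.integral_nonneg ht.1 fun s hs => hg s (hIccT hs))
    ((hh t ht).trans (hineq t ht))
    (log_one_add_log_le_of_le_add_integral ht.1 (fun s hs => hg s (hIccT hs)) hgi' hGi
      (fun s hs => hh s (hsub hs)) (fun s hs => hineq s (hsub hs)))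
  calc h t ≤ _ := (hineq t ht).trans hbound
    _ ≤ 2 * C₁ * exp (exp (C₁ * (1 + log C₁) * ∫ s in (0:ℝ)..t, g s)) := by
      nlinarith [exp_pos (exp (C₁ * (1 + log C₁) * ∫ s in (0:ℝ)..t, g s))]

theorem stmt15 (C₁ : ℝ) (hC₁ : 0 < C₁) :
    ∃ Δ₀ > 0, ∀ (T : ℝ), 0 < T → ∀ (g h : ℝ → ℝ),
      (∀ s ∈ Set.Icc 0 T, 0 ≤ g s) →
      MeasureTheory.IntegrableOn g (Set.Icc 0 T) →
      ContinuousOn h (Set.Ico 0 T) →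
      (∀ t ∈ Set.Ico 0 T, 1 ≤ h t) →
      (∀ t ∈ Set.Ico 0 T,
        h t ≤ C₁ + C₁ * ∫ s in (0:ℝ)..t, g s * h s * Real.log (h s)) →
      ∀ t ∈ Set.Ico 0 T,
        h t ≤ 2 * C₁ * Real.exp (Real.exp (Δ₀ * ∫ s in (0:ℝ)..t, g s)) :=
  stmt15_general C₁
end
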